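/- arXiv:2310.06453 — 4 statements merged into one kernel-verified Lean document; each statement's English description precedes it below -/
import Mathlib

section
/- Let $R>0$, let $\kappa$ be a Borel probability measure on $[-R,R]$, and let $h\colon [-R,R]\to[0,\infty)$ be Lipschitz with constant $L$, non-increasing on $[-R,0]$, non-decreasing on $[0,R]$, with $h(0)=0$. Let $\overline{s}=\int_{[-R,R]} s\,d\kappa(s)$ and $\overline{h}=\int_{[-R,R]} h(s)\,d\kappa(s)$. Then $h(\overline{s})^2 \le L R\, \overline{h}$. -/
open MeasureTheory Filter Topology
open scoped ENNReal NNReal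

/-!
Assume `s̄ ≥ 0`, the other case following by the reflection `s ↦ -s`, and write `a = h(s̄)`.
On `[-R, R]`, `h` lies above the chord `ℓ` through `(s̄ - a / L, 0)` and `(R, a)`: left of `s̄` by
the Lipschitz bound together with `h ≥ 0`, right of `s̄` because `h ≥ a` there. The mean of the
affine function `ℓ` is `ℓ(s̄) = a² / (a + L (R - s̄))`, so `h̄ ≥ a² / (a + L (R - s̄))`, and
`a ≤ L s̄` turns the denominator into at most `L R`.
-/

open Set

lemma LipschitzOnWith.comp_neg {E F : Type*} [SeminormedAddCommGroup E] [PseudoEMetricSpace F]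
    {K : ℝ≥0} {f : E → F} {s : Set E} (hf : LipschitzOnWith K f s) :
    LipschitzOnWith K (fun x => f (-x)) (-s) := by
  intro x hx y hy
  simpa only [edist_neg_neg] using hf hx hy

lemma AntitoneOn.monotoneOn_comp_neg {α β : Type*} [AddCommGroup α] [PartialOrder α]
    [IsOrderedAddMonoid α] [Preorder β] {f : α → β} {s : Set α} (hf : AntitoneOn f s) :
    MonotoneOn (fun x => f (-x)) (-s) :=
  fun _ hx _ hy hxy => hf hy hx (neg_le_neg hxy)

lemma LipschitzOnWith.apply_le_mul_abs {K : ℝ≥0} {f : ℝ → ℝ} {s : Set ℝ}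
    (hf : LipschitzOnWith K f s) (h0s : 0 ∈ s) (hf0 : f 0 = 0) {x : ℝ} (hx : x ∈ s) :
    f x ≤ K * |x| := by
  simpa [Real.dist_eq, hf0] using (le_abs_self _).trans (hf.dist_le_mul x hx 0 h0s)

lemma LipschitzOnWith.aemeasurable_comp {α Ω : Type*} [PseudoMetricSpace α] [MeasurableSpace α]
    [OpensMeasurableSpace α] [MeasurableSpace Ω] {μ : Measure Ω} {K : ℝ≥0} {f : α → ℝ}
    {s : Set α} {X : Ω → α} (hf : LipschitzOnWith K f s) (hX : AEMeasurable X μ)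
    (hXs : ∀ᵐ ω ∂μ, X ω ∈ s) : AEMeasurable (fun ω => f (X ω)) μ := by
  obtain ⟨g, hg, hfg⟩ := hf.extend_real
  exact (hg.continuous.measurable.comp_aemeasurable hX).congr
    (hXs.mono fun ω hω => (hfg hω).symm)

lemma integral_const_add_mul {Ω : Type*} [MeasurableSpace Ω] {μ : Measure Ω}
    [IsProbabilityMeasure μ] {X : Ω → ℝ} (hX : Integrable X μ) (α β : ℝ) :
    ∫ ω, (α + β * X ω) ∂μ = α + β * ∫ ω, X ω ∂μ := by
  rw [integral_add (integrable_const _) (hX.const_mul _), integral_const, integral_const_mul]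
  simp

/-- `f` dominates the chord through `(m - f m / L, 0)` and `(R, f m)`, multiplied out to avoid
dividing by `f m + L (R - m)`. -/
lemma mul_sub_le_mul_of_lipschitzOnWith_of_monotoneOn {L : ℝ≥0} {f : ℝ → ℝ} {R m s : ℝ}
    (hf : LipschitzOnWith L f (Icc (-R) R)) (hf_nonneg : ∀ x ∈ Icc (-R) R, 0 ≤ f x)
    (hf_mono : MonotoneOn f (Icc 0 R)) (hm : m ∈ Icc 0 R) (hs : s ∈ Icc (-R) R) :
    f m * (f m - L * (m - s)) ≤ (f m + L * (R - m)) * f s := by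
  have hm' : m ∈ Icc (-R) R := ⟨by linarith [hm.1, hm.2], hm.2⟩
  have ha : 0 ≤ f m := hf_nonneg m hm'
  have hfs : 0 ≤ f s := hf_nonneg s hs
  have hLRm : 0 ≤ (L : ℝ) * (R - m) := mul_nonneg L.coe_nonneg (by linarith [hm.2])
  rcases le_total s m with hsm | hms
  · have hlip : f m - L * (m - s) ≤ f s := by
      have := (le_abs_self _).trans (hf.dist_le_mul m hm' s hs)
      rw [Real.dist_eq, abs_of_nonneg (sub_nonneg.2 hsm)] at this
      linarith
    calc f m * (f m - L * (m - s)) ≤ f m * f s := mul_le_mul_of_nonneg_left hlip ha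
      _ ≤ (f m + L * (R - m)) * f s := by nlinarith
  · have hge : f m ≤ f s := hf_mono hm ⟨hm.1.trans hms, hs.2⟩ hms
    have hLsm : (L : ℝ) * (s - m) ≤ L * (R - m) :=
      mul_le_mul_of_nonneg_left (by linarith [hs.2]) L.coe_nonneg
    calc f m * (f m - L * (m - s)) ≤ f m * (f m + L * (R - m)) := by nlinarith
      _ ≤ (f m + L * (R - m)) * f s := by nlinarith

theorem sq_apply_integral_le_of_monotoneOn {Ω : Type*} [MeasurableSpace Ω] {μ : Measure Ω}
    [IsProbabilityMeasure μ] {R : ℝ} {L : ℝ≥0} {f : ℝ → ℝ} {X : Ω → ℝ}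
    (hX : AEMeasurable X μ) (hXR : ∀ᵐ ω ∂μ, X ω ∈ Icc (-R) R)
    (hf : LipschitzOnWith L f (Icc (-R) R)) (hf_nonneg : ∀ x ∈ Icc (-R) R, 0 ≤ f x)
    (hf_mono : MonotoneOn f (Icc 0 R)) (hf0 : f 0 = 0) (hmean : 0 ≤ ∫ ω, X ω ∂μ) :
    f (∫ ω, X ω ∂μ) ^ 2 ≤ L * R * ∫ ω, f (X ω) ∂μ := by
  set m := ∫ ω, X ω ∂μ
  have hX_int : Integrable X μ := .of_mem_Icc _ _ hX hXR
  have hm : m ∈ Icc 0 R :=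
    ⟨hmean, by simpa using integral_mono_ae hX_int (integrable_const R) (hXR.mono fun _ h => h.2)⟩
  have h0R : (0 : ℝ) ∈ Icc (-R) R := ⟨by linarith [hm.1, hm.2], hm.1.trans hm.2⟩
  have hfX : ∀ᵐ ω ∂μ, f (X ω) ∈ Icc 0 (L * R) := hXR.mono fun ω hω =>
    ⟨hf_nonneg _ hω, (hf.apply_le_mul_abs h0R hf0 hω).trans
      (mul_le_mul_of_nonneg_left (abs_le.2 hω) L.coe_nonneg)⟩
  have hfX_int : Integrable (fun ω => f (X ω)) μ :=
    .of_mem_Icc _ _ (hf.aemeasurable_comp hX hXR) hfX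
  have hfm : f m ≤ L * m := by
    simpa [abs_of_nonneg hm.1] using hf.apply_le_mul_abs h0R hf0 ⟨by linarith [hm.1, hm.2], hm.2⟩
  calc f m ^ 2 = ∫ ω, (f m * (f m - L * m) + f m * L * X ω) ∂μ := by
        rw [integral_const_add_mul hX_int]; ring
    _ ≤ ∫ ω, (f m + L * (R - m)) * f (X ω) ∂μ := by
        refine integral_mono_ae ((integrable_const _).add (hX_int.const_mul _))
          (hfX_int.const_mul _) (hXR.mono fun ω hω => ?_)
        have := mul_sub_le_mul_of_lipschitzOnWith_of_monotoneOn hf hf_nonneg hf_mono hm hω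
        linarith
    _ = (f m + L * (R - m)) * ∫ ω, f (X ω) ∂μ := integral_const_mul _ _
    _ ≤ L * R * ∫ ω, f (X ω) ∂μ :=
        mul_le_mul_of_nonneg_right (by linarith) (integral_nonneg_of_ae (hfX.mono fun _ h => h.1))

theorem stmt0_general (R : ℝ) (κ : Measure ℝ) [IsProbabilityMeasure κ]
    (hκ : κ ((Set.Icc (-R) R)ᶜ) = 0)
    (L : ℝ≥0) (h : ℝ → ℝ)
    (hLip : LipschitzOnWith L h (Set.Icc (-R) R))
    (hnonneg : ∀ s ∈ Set.Icc (-R) R, 0 ≤ h s)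
    (hdec : AntitoneOn h (Set.Icc (-R) 0))
    (hinc : MonotoneOn h (Set.Icc 0 R))
    (h0 : h 0 = 0) :
    (h (∫ s, s ∂κ)) ^ 2 ≤ (L : ℝ) * R * ∫ s, h s ∂κ := by
  have hsupp : ∀ᵐ s ∂κ, s ∈ Icc (-R) R := ae_iff.2 hκ
  rcases le_total 0 (∫ s, s ∂κ) with hmean | hmean
  · exact sq_apply_integral_le_of_monotoneOn aemeasurable_id' hsupp hLip hnonneg hinc h0 hmean
  · have hsymm : -Icc (-R) R = Icc (-R) R := by simp [neg_Icc]
    have hreflect := sq_apply_integral_le_of_monotoneOn (X := fun s => -s) (f := fun s => h (-s))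
      measurable_neg.aemeasurable (hsupp.mono fun s hs => by rwa [← hsymm, Set.neg_mem_neg])
      (hsymm ▸ hLip.comp_neg) (fun s hs => hnonneg _ (by rwa [← hsymm] at hs))
      (by simpa [neg_Icc] using hdec.monotoneOn_comp_neg) (by simpa using h0)
      (by rw [integral_neg]; linarith)
    simpa [integral_neg fun s : ℝ => s] using hreflect

/-- If `κ` is a Borel probability measure on `[-R,R]`, `h` is a nonnegative Lipschitz
(constant `L`) function, non-increasing on `[-R,0]`, non-decreasing on `[0,R]`, with
`h 0 = 0`, then `h(s̄)^2 ≤ L R h̄` where `s̄, h̄` are the κ-means of the identity and of `h`. -/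
theorem stmt0 (R : ℝ) (hR : 0 < R) (κ : Measure ℝ) [IsProbabilityMeasure κ]
    (hκ : κ ((Set.Icc (-R) R)ᶜ) = 0)
    (L : ℝ≥0) (h : ℝ → ℝ)
    (hLip : LipschitzOnWith L h (Set.Icc (-R) R))
    (hnonneg : ∀ s ∈ Set.Icc (-R) R, 0 ≤ h s)
    (hdec : AntitoneOn h (Set.Icc (-R) 0))
    (hinc : MonotoneOn h (Set.Icc 0 R))
    (h0 : h 0 = 0) :
    (h (∫ s, s ∂κ)) ^ 2 ≤ (L : ℝ) * R * ∫ s, h s ∂κ :=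
  stmt0_general R κ hκ L h hLip hnonneg hdec hinc h0
end

section
/- Let $\mu$ be a finite symmetric nonnegative Borel measure on $\mathbb{R}^d$ and $\mathcal{B}[\phi,\psi](x)=\frac{1}{2}\int_{\mathbb{R}^d}(\phi(x+z)-\phi(x))(\psi(x+z)-\psi(x))\,d\mu(z)$. If $\phi,\psi,\varphi\in L^\infty(\mathbb{R}^d)$ and at least one of them has compact support, then $\int_{\mathbb{R}^d}\mathcal{B}[\phi,\psi\varphi]\,dx = \int_{\mathbb{R}^d}\mathcal{B}[\phi,\psi]\,\varphi\,dx + \int_{\mathbb{R}^d}\mathcal{B}[\phi,\varphi]\,\psi\,dx$. -/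
open MeasureTheory Filter Topology
open scoped ENNReal NNReal

/-!
Write `Δf (x, z) = f (x + z) - f x`. The Leibniz rule `Δ(ψχ) = (Δψ) χ + (Δχ) ψ + (Δψ)(Δχ)` reduces
the claim to `∫∫ Δφ Δψ Δχ dμ dx = 0`. Since `μ` is symmetric and Lebesgue measure is translation
invariant, the involution `(x, z) ↦ (x + z, -z)` preserves `dx ⊗ μ`, and it changes the sign of
every difference, hence of the triple product. Fubini applies because all kernels are bounded and
vanish unless `x` or `x + z` lies in the support of the compactly supported function, a set of
finite `dx ⊗ μ`-measure.
-/

namespace MeasureTheory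

variable {G E : Type*} [AddGroup G] [MeasurableSpace G] [NormedAddCommGroup E]
  {ν μ : Measure G}

theorem measure_prod_setOf_mem_or_add_mem_lt_top [MeasurableAdd₂ G] [SFinite ν]
    [ν.IsAddRightInvariant] [IsFiniteMeasure μ] {s : Set G} (hs : MeasurableSet s)
    (hνs : ν s ≠ ∞) :
    ν.prod μ {p | p.1 ∈ s ∨ p.1 + p.2 ∈ s} < ∞ := by
  have hshift : ν.prod μ {p | p.1 + p.2 ∈ s} = ν s * μ Set.univ := by
    rw [show {p : G × G | p.1 + p.2 ∈ s} = (fun p => p.1 + p.2) ⁻¹' s from rfl,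
      Measure.prod_apply_symm (measurable_add hs)]
    have hslice (y : G) : ν ((fun x => (x, y)) ⁻¹' ((fun p => p.1 + p.2) ⁻¹' s)) = ν s :=
      measure_preimage_add_right ν y s
    simp only [hslice, lintegral_const]
  have hfst : ν.prod μ {p | p.1 ∈ s} = ν s * μ Set.univ := by
    rw [← Measure.prod_prod, Set.prod_univ]; rfl
  have hprod : ν s * μ Set.univ < ∞ := ENNReal.mul_lt_top hνs.lt_top (measure_lt_top _ _)
  exact measure_union_lt_top (hfst ▸ hprod) (hshift ▸ hprod)

theorem integrable_prod_of_norm_le_of_eq_zero [MeasurableAdd₂ G] [SFinite ν]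
    [ν.IsAddRightInvariant] [IsFiniteMeasure μ] {s : Set G} (hs : MeasurableSet s)
    (hνs : ν s ≠ ∞) {F : G × G → E} (hF : AEStronglyMeasurable F (ν.prod μ)) {M : ℝ}
    (hFM : ∀ p, ‖F p‖ ≤ M) (hF0 : ∀ x z, x ∉ s → x + z ∉ s → F (x, z) = 0) :
    Integrable F (ν.prod μ) := by
  refine (integrableOn_iff_integrable_of_support_subset fun p hp => ?_).1
    (Measure.integrableOn_of_bounded (measure_prod_setOf_mem_or_add_mem_lt_top hs hνs).ne
      hF (M := M) (Eventually.of_forall hFM))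
  by_contra h
  exact hp (hF0 p.1 p.2 (fun h' => h (Or.inl h')) (fun h' => h (Or.inr h')))

theorem integral_integral_eq_zero_of_antisymm [NormedSpace ℝ E] [MeasurableAdd G] [MeasurableNeg G]
    [SFinite ν] [ν.IsAddRightInvariant] [SFinite μ] [μ.IsNegInvariant] {F : G × G → E}
    (hF : Integrable F (ν.prod μ)) (hanti : ∀ x z, F (x + z, -z) = -F (x, z)) :
    ∫ x, ∫ z, F (x, z) ∂μ ∂ν = 0 := by
  have hinner (z : G) : ∫ x, F (x, -z) ∂ν = -∫ x, F (x, z) ∂ν := by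
    rw [← integral_add_right_eq_self _ z]
    simp only [hanti, integral_neg]
  have : IsAddTorsionFree E := .of_isTorsionFree ℝ E
  rw [integral_integral_swap (by exact hF)]
  refine self_eq_neg.1 ?_
  calc ∫ z, ∫ x, F (x, z) ∂ν ∂μ = ∫ z, ∫ x, F (x, -z) ∂ν ∂μ :=
        (integral_neg_eq_self (fun z => ∫ x, F (x, z) ∂ν) μ).symm
    _ = -∫ z, ∫ x, F (x, z) ∂ν ∂μ := by simp only [hinner, integral_neg]

/-- The carré du champ `𝓑[φ, ψ]` of the Lévy operator `L f (x) = ∫ (f (x + z) - f x) dμ(z)`. -/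
noncomputable def carreDuChamp (μ : Measure G) (φ ψ : G → ℝ) (x : G) : ℝ :=
  1 / 2 * ∫ z, (φ (x + z) - φ x) * (ψ (x + z) - ψ x) ∂μ

theorem integral_carreDuChamp_mul [MeasurableAdd G] [MeasurableNeg G] [SFinite ν]
    [ν.IsAddRightInvariant] [SFinite μ] [μ.IsNegInvariant] {φ ψ χ : G → ℝ}
    (h₁ : Integrable (fun p : G × G => (φ (p.1 + p.2) - φ p.1) * (ψ (p.1 + p.2) - ψ p.1) * χ p.1)
      (ν.prod μ))
    (h₂ : Integrable (fun p : G × G => (φ (p.1 + p.2) - φ p.1) * (χ (p.1 + p.2) - χ p.1) * ψ p.1)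
      (ν.prod μ))
    (h₃ : Integrable (fun p : G × G =>
      (φ (p.1 + p.2) - φ p.1) * (ψ (p.1 + p.2) - ψ p.1) * (χ (p.1 + p.2) - χ p.1)) (ν.prod μ)) :
    ∫ x, carreDuChamp μ φ (ψ * χ) x ∂ν
      = ∫ x, carreDuChamp μ φ ψ x * χ x ∂ν + ∫ x, carreDuChamp μ φ χ x * ψ x ∂ν := by
  have hleibniz : ∀ᵐ x ∂ν, carreDuChamp μ φ (ψ * χ) x
      = 1 / 2 * ∫ z, (φ (x + z) - φ x) * (ψ (x + z) - ψ x) * χ x ∂μ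
        + 1 / 2 * ∫ z, (φ (x + z) - φ x) * (χ (x + z) - χ x) * ψ x ∂μ
        + 1 / 2 * ∫ z, (φ (x + z) - φ x) * (ψ (x + z) - ψ x) * (χ (x + z) - χ x) ∂μ := by
    filter_upwards [h₁.prod_right_ae, h₂.prod_right_ae, h₃.prod_right_ae] with x i₁ i₂ i₃
    rw [carreDuChamp, ← mul_add, ← mul_add, ← integral_add i₁ i₂,
      ← integral_add (f := fun z => _ + _) (i₁.add i₂) i₃]
    congr 2 with z
    simp only [Pi.mul_apply]
    ring
  have hantisymm : ∫ x, ∫ z, (φ (x + z) - φ x) * (ψ (x + z) - ψ x) * (χ (x + z) - χ x) ∂μ ∂ν = 0 :=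
    integral_integral_eq_zero_of_antisymm h₃ fun x z => by
      simp only [add_neg_cancel_right]
      ring
  have hpull (f g : G → ℝ) (x : G) : carreDuChamp μ φ f x * g x
      = 1 / 2 * ∫ z, (φ (x + z) - φ x) * (f (x + z) - f x) * g x ∂μ := by
    rw [carreDuChamp, mul_assoc, integral_mul_const]
  simp only [hpull]
  rw [integral_congr_ae hleibniz, integral_add _ (h₃.integral_prod_left.const_mul _),
    integral_const_mul, hantisymm, mul_zero, add_zero,
    integral_add (h₁.integral_prod_left.const_mul _) (h₂.integral_prod_left.const_mul _)]
  exact (h₁.integral_prod_left.const_mul _).add (h₂.integral_prod_left.const_mul _)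

end MeasureTheory

/-- Product rule for the bilinear operator of a zero-order Lévy operator: for a finite
symmetric nonnegative measure `μ` and bounded measurable `φ, ψ, χ`, one of which has
compact support, `∫ 𝓑[φ, ψχ] dx = ∫ 𝓑[φ,ψ] χ dx + ∫ 𝓑[φ,χ] ψ dx`. -/
theorem stmt5 (d : ℕ) (μ : Measure (EuclideanSpace ℝ (Fin d))) [IsFiniteMeasure μ]
    (hsym : μ.map (fun z => -z) = μ)
    (φ ψ χ : EuclideanSpace ℝ (Fin d) → ℝ)
    (hφm : Measurable φ) (hψm : Measurable ψ) (hχm : Measurable χ)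
    (Cφ Cψ Cχ : ℝ) (hφb : ∀ x, |φ x| ≤ Cφ) (hψb : ∀ x, |ψ x| ≤ Cψ) (hχb : ∀ x, |χ x| ≤ Cχ)
    (hcs : HasCompactSupport φ ∨ HasCompactSupport ψ ∨ HasCompactSupport χ) :
    ∫ x, (1 / 2) * ∫ z, (φ (x + z) - φ x) * (ψ (x + z) * χ (x + z) - ψ x * χ x) ∂μ
      = (∫ x, ((1 / 2) * ∫ z, (φ (x + z) - φ x) * (ψ (x + z) - ψ x) ∂μ) * χ x)
        + ∫ x, ((1 / 2) * ∫ z, (φ (x + z) - φ x) * (χ (x + z) - χ x) ∂μ) * ψ x := by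
  have : μ.IsNegInvariant := ⟨hsym⟩
  set F₁ : EuclideanSpace ℝ (Fin d) × EuclideanSpace ℝ (Fin d) → ℝ := fun p =>
    (φ (p.1 + p.2) - φ p.1) * (ψ (p.1 + p.2) - ψ p.1) * χ p.1
  set F₂ : EuclideanSpace ℝ (Fin d) × EuclideanSpace ℝ (Fin d) → ℝ := fun p =>
    (φ (p.1 + p.2) - φ p.1) * (χ (p.1 + p.2) - χ p.1) * ψ p.1
  set F₃ : EuclideanSpace ℝ (Fin d) × EuclideanSpace ℝ (Fin d) → ℝ := fun p =>
    (φ (p.1 + p.2) - φ p.1) * (ψ (p.1 + p.2) - ψ p.1) * (χ (p.1 + p.2) - χ p.1)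
  obtain ⟨s, hs, hsν, hvan⟩ : ∃ s, MeasurableSet s ∧ volume s ≠ ∞ ∧
      ∀ x z, x ∉ s → x + z ∉ s → F₁ (x, z) = 0 ∧ F₂ (x, z) = 0 ∧ F₃ (x, z) = 0 := by
    rcases hcs with h | h | h <;>
      exact ⟨_, (isClosed_tsupport _).measurableSet, h.measure_lt_top.ne, fun x z hx hxz => by
        simp [F₁, F₂, F₃, image_eq_zero_of_notMem_tsupport hx,
          image_eq_zero_of_notMem_tsupport hxz]⟩
  have hΔ {f : EuclideanSpace ℝ (Fin d) → ℝ} {C : ℝ} (hf : ∀ x, |f x| ≤ C) (x z) :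
      ‖f (x + z) - f x‖ ≤ C + C :=
    norm_sub_le_of_le (hf _) (hf _)
  exact integral_carreDuChamp_mul
    (integrable_prod_of_norm_le_of_eq_zero hs hsν (by fun_prop)
      (fun _ => norm_mul_le_of_le (norm_mul_le_of_le (hΔ hφb _ _) (hΔ hψb _ _)) (hχb _))
      fun x z hx hxz => (hvan x z hx hxz).1)
    (integrable_prod_of_norm_le_of_eq_zero hs hsν (by fun_prop)
      (fun _ => norm_mul_le_of_le (norm_mul_le_of_le (hΔ hφb _ _) (hΔ hχb _ _)) (hψb _))
      fun x z hx hxz => (hvan x z hx hxz).2.1)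
    (integrable_prod_of_norm_le_of_eq_zero hs hsν (by fun_prop)
      (fun _ => norm_mul_le_of_le (norm_mul_le_of_le (hΔ hφb _ _) (hΔ hψb _ _)) (hΔ hχb _ _))
      fun x z hx hxz => (hvan x z hx hxz).2.2)
end

section
/- Let $\mu$ be a nonnegative symmetric Borel measure on $\mathbb{R}^d$ admitting a density $\frac{d\mu}{dz}(z)\ge \frac{1}{|z|^d\nu(|z|)}$ for a non-decreasing function $\nu\ge 0$ with $\nu(0^+)=0$, and satisfying $\int(|z|^2\wedge1)d\mu(z)<\infty$. Suppose $(\phi_n)_{n\in\mathbb{N}}\subset L^2(\mathbb{R}^d)$ satisfies $\sup_n \frac{1}{2}\int_{\mathbb{R}^d}\int_{|z|>1/n}(\phi_n(x+z)-\phi_n(x))^2\,d\mu(z)\,dx =: C<\infty$. Then $(\phi_n)$ is equicontinuous with respect to $L^2$-translations: $\lim_{|y|\to0}\sup_n\|\phi_n(\cdot+y)-\phi_n\|_{L^2(\mathbb{R}^d)}=0$. -/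
open MeasureTheory Filter Topology Metric Module
open scoped ENNReal

/-!
Let `τ(y) = ‖φ(· + y) - φ‖_{L²}`. It is subadditive, so `τ(y)² ≤ 2 (τ(z)² + τ(y - z)²)`.
Averaging over `z` in the ball of radius `|y|/4` around `y/2`, which is invariant under
`z ↦ y - z` and on which `|y|/4 < |z| < 3|y|/4`, and using there the lower bound
`dμ/dz ≥ 1 / ((3|y|/4)^d ν(3|y|/4))`, bounds `τ(y)²` by a multiple of the truncated energy
times `ν(3|y|/4)`, provided the ball avoids the truncation `|z| ≤ 1/(n+1)`. One more use of
subadditivity reaches shorter `y`, so `τₙ(y)² ≲ ν(max (9/(n+1)) (3|y|/4))`, which is small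
uniformly for large `n` and small `y`; the finitely many remaining `φₙ` are handled by the
continuity of translations in `L²`.
-/

lemma tendsto_iSup_of_tendsto_prod_atTop {X : Type*} {l : Filter X} {g : ℕ → X → ℝ≥0∞}
    (hg : ∀ n, Tendsto (g n) l (𝓝 0))
    (hunif : Tendsto (fun p : ℕ × X => g p.1 p.2) (atTop ×ˢ l) (𝓝 0)) :
    Tendsto (fun x => ⨆ n, g n x) l (𝓝 0) := by
  refine ENNReal.tendsto_nhds_zero.2 fun ε hε => ?_
  obtain ⟨p, hp, q, hq, hpq⟩ := eventually_prod_iff.1 (ENNReal.tendsto_nhds_zero.1 hunif ε hε)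
  obtain ⟨N, hN⟩ := eventually_atTop.1 hp
  filter_upwards [hq, (Finset.range N).eventually_all.2 fun n _ =>
    ENNReal.tendsto_nhds_zero.1 (hg n) ε hε] with x hqx hsmall
  refine iSup_le fun n => ?_
  rcases lt_or_ge n N with hn | hn
  · exact hsmall n (Finset.mem_range.2 hn)
  · exact hpq (hN n hn) hqx

lemma ENNReal.tendsto_nhds_zero_of_tendsto_sq {X : Type*} {l : Filter X} {g : X → ℝ≥0∞}
    (hg : Tendsto (fun x => g x ^ 2) l (𝓝 0)) : Tendsto g l (𝓝 0) := by
  have h := ((ENNReal.continuous_rpow_const (y := ((2 : ℕ) : ℝ)⁻¹)).tendsto 0).comp hg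
  simp only [Function.comp_def, ENNReal.pow_rpow_inv_natCast two_ne_zero] at h
  rwa [ENNReal.zero_rpow_of_pos (by positivity)] at h

lemma tendsto_max_inv_succ_norm_nhdsGT {E : Type*} [NormedAddCommGroup E] :
    Tendsto (fun p : ℕ × E => max (9 * ((p.1 : ℝ) + 1)⁻¹) (3 * ‖p.2‖ / 4))
      (atTop ×ˢ 𝓝 0) (𝓝[>] 0) := by
  have h₁ : Tendsto (fun k : ℕ => 9 * ((k : ℝ) + 1)⁻¹) atTop (𝓝 0) := by
    simpa using tendsto_one_div_add_atTop_nhds_zero_nat.const_mul (9 : ℝ)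
  have h₂ : Tendsto (fun y : E => 3 * ‖y‖ / 4) (𝓝 0) (𝓝 0) := by
    simpa using ((continuous_norm.tendsto (0 : E)).const_mul (3 : ℝ)).div_const 4
  refine tendsto_nhdsWithin_iff.2 ⟨?_, Eventually.of_forall fun p =>
    Set.mem_Ioi.2 (lt_max_of_lt_left (by positivity))⟩
  simpa using (h₁.comp tendsto_fst).max (h₂.comp tendsto_snd)

lemma sq_eLpNorm_two_eq_lintegral {α : Type*} [MeasurableSpace α] (g : α → ℝ) (μ : Measure α) :
    eLpNorm g 2 μ ^ 2 = ∫⁻ x, ENNReal.ofReal (g x ^ 2) ∂μ := by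
  have h := eLpNorm_nnreal_pow_eq_lintegral (f := g) (μ := μ) (p := 2) two_ne_zero
  simp only [ENNReal.coe_ofNat, NNReal.coe_ofNat, ENNReal.rpow_two] at h
  rw [h]
  congr! 2 with x
  rw [Real.enorm_eq_ofReal_abs, ← ENNReal.ofReal_pow (abs_nonneg _), sq_abs]

lemma norm_mem_Ioo_of_mem_ball_half_smul {E : Type*} [NormedAddCommGroup E] [NormedSpace ℝ E]
    {y z : E} (hz : z ∈ ball ((2 : ℝ)⁻¹ • y) (‖y‖ / 4)) :
    ‖z‖ ∈ Set.Ioo (‖y‖ / 4) (3 * ‖y‖ / 4) := by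
  have hhalf : ‖(2 : ℝ)⁻¹ • y‖ = ‖y‖ / 2 := by
    rw [norm_smul, Real.norm_of_nonneg (by norm_num)]; ring
  rw [mem_ball, dist_eq_norm] at hz
  have h1 := norm_sub_norm_le ((2 : ℝ)⁻¹ • y) z
  have h2 := norm_le_norm_add_norm_sub' z ((2 : ℝ)⁻¹ • y)
  rw [norm_sub_rev] at h1
  constructor <;> linarith

section TranslationDefect

variable {E : Type*} [NormedAddCommGroup E] [MeasureSpace E]

noncomputable def translationDefect (φ : E → ℝ) (y : E) : ℝ≥0∞ :=
  eLpNorm (fun x => φ (x + y) - φ x) 2 volume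

lemma translationDefect_zero (φ : E → ℝ) : translationDefect φ 0 = 0 := by
  simp [translationDefect]

variable [BorelSpace E] [(volume : Measure E).IsAddRightInvariant]

lemma translationDefect_add_le {φ : E → ℝ} (hφ : Measurable φ) (y z : E) :
    translationDefect φ (y + z) ≤ translationDefect φ y + translationDefect φ z := by
  have hsplit : (fun x => φ (x + (y + z)) - φ x)
      = (fun x => φ (x + z) - φ x) ∘ (· + y) + fun x => φ (x + y) - φ x := by
    ext x; simp only [Function.comp_apply, Pi.add_apply, add_assoc, add_comm y z]; ring
  rw [translationDefect, hsplit, add_comm (translationDefect φ y)]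
  refine (eLpNorm_add_le (by fun_prop) (by fun_prop) one_le_two).trans_eq ?_
  rw [eLpNorm_comp_measurePreserving (by fun_prop) (measurePreserving_add_right volume y)]
  rfl

lemma sq_translationDefect_le {φ : E → ℝ} (hφ : Measurable φ) (y z : E) :
    translationDefect φ y ^ 2
      ≤ 2 * (translationDefect φ z ^ 2 + translationDefect φ (y - z) ^ 2) := by
  have hsq := ENNReal.rpow_add_le_mul_rpow_add_rpow (translationDefect φ z)
    (translationDefect φ (y - z)) one_le_two
  norm_num [ENNReal.rpow_two] at hsq
  calc translationDefect φ y ^ 2 = translationDefect φ (z + (y - z)) ^ 2 := by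
        rw [add_sub_cancel]
    _ ≤ (translationDefect φ z + translationDefect φ (y - z)) ^ 2 := by
        gcongr; exact translationDefect_add_le hφ z (y - z)
    _ ≤ _ := hsq

lemma sq_translationDefect_le_of_forall_le [NormedSpace ℝ E] {φ : E → ℝ} (hφ : Measurable φ)
    {ν : ℝ → ℝ} (hνmono : MonotoneOn ν (Set.Ici 0)) {c : ℝ} (hc : 0 < c) {K : ℝ≥0∞}
    (hK : ∀ y : E, c ≤ ‖y‖ / 4 →
      translationDefect φ y ^ 2 ≤ K * ENNReal.ofReal (ν (3 * ‖y‖ / 4)))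
    (y : E) :
    translationDefect φ y ^ 2 ≤ 4 * K * ENNReal.ofReal (ν (max (9 * c) (3 * ‖y‖ / 4))) := by
  set M := max (9 * c) (3 * ‖y‖ / 4)
  have hνM : ∀ s, 0 ≤ s → s ≤ M → K * ENNReal.ofReal (ν s) ≤ K * ENNReal.ofReal (ν M) :=
    fun s hs hsM => by gcongr; exact hνmono hs (hs.trans hsM) hsM
  by_cases hy : c ≤ ‖y‖ / 4
  · calc translationDefect φ y ^ 2 ≤ K * ENNReal.ofReal (ν (3 * ‖y‖ / 4)) := hK y hy
      _ ≤ K * ENNReal.ofReal (ν M) := hνM _ (by positivity) (le_max_right _ _)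
      _ ≤ 4 * K * ENNReal.ofReal (ν M) := by
          rw [mul_assoc]; exact le_mul_of_one_le_left' (by norm_num)
  rcases eq_or_ne y 0 with rfl | hy0
  · simp [translationDefect_zero]
  -- `hK` does not apply to `y`, but it does to `w` and `y - w`
  set w : E := (8 * c / ‖y‖) • y
  have hw : ‖w‖ = 8 * c := by
    rw [norm_smul, Real.norm_of_nonneg (by positivity),
      div_mul_cancel₀ _ (norm_ne_zero_iff.2 hy0)]
  have h₁ := norm_sub_norm_le w y
  have h₂ := norm_sub_le y w
  rw [norm_sub_rev] at h₁
  push Not at hy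
  calc translationDefect φ y ^ 2
      ≤ 2 * (translationDefect φ w ^ 2 + translationDefect φ (y - w) ^ 2) :=
        sq_translationDefect_le hφ y w
    _ ≤ 2 * (K * ENNReal.ofReal (ν M) + K * ENNReal.ofReal (ν M)) := by
        gcongr
        · exact (hK w (by linarith)).trans
            (hνM _ (by positivity) (le_max_of_le_left (by linarith)))
        · exact (hK (y - w) (by linarith)).trans
            (hνM _ (by positivity) (le_max_of_le_left (by linarith)))
    _ = 4 * K * ENNReal.ofReal (ν M) := by ring

end TranslationDefect

section FiniteDimensional

variable {E : Type*} [NormedAddCommGroup E] [NormedSpace ℝ E] [FiniteDimensional ℝ E]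
  [MeasureSpace E] [BorelSpace E] [(volume : Measure E).IsAddHaarMeasure]

lemma tendsto_translationDefect {g : E → ℝ} (hg : MemLp g 2 volume) :
    Tendsto (translationDefect g) (𝓝 0) (𝓝 0) := by
  have hF : Tendsto (fun y : E => DomAddAct.mk y +ᵥ hg.toLp g) (𝓝 0) (𝓝 (hg.toLp g)) := by
    have : Fact ((1 : ℝ≥0∞) ≤ 2) := ⟨one_le_two⟩
    have : Fact ((2 : ℝ≥0∞) ≠ ∞) := ⟨ENNReal.ofNat_ne_top⟩
    have hcont : Continuous fun y : E => DomAddAct.mk y +ᵥ hg.toLp g :=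
      (DomAddAct.continuous_mk (M := E)).vadd continuous_const
    simpa using hcont.tendsto 0
  refine ((Lp.tendsto_Lp_iff_tendsto_eLpNorm' _ _).1 hF).congr fun y => eLpNorm_congr_ae ?_
  filter_upwards [DomAddAct.vadd_Lp_ae_eq (DomAddAct.mk y) (hg.toLp g),
    (measurePreserving_add_right volume y).quasiMeasurePreserving.ae_eq hg.coeFn_toLp,
    hg.coeFn_toLp] with x h1 h2 h3
  simp_all [add_comm]

lemma measurable_sq_translationDefect {φ : E → ℝ} (hφ : Measurable φ) :
    Measurable fun y => translationDefect φ y ^ 2 := by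
  simp_rw [translationDefect, sq_eLpNorm_two_eq_lintegral]
  exact Measurable.lintegral_prod_left (by fun_prop)

lemma lintegral_setLIntegral_withDensity_eq {f : E → ℝ≥0∞} (hf : Measurable f)
    {φ : E → ℝ} (hφ : Measurable φ) {S : Set E} (hS : MeasurableSet S) :
    ∫⁻ x, ∫⁻ z in S, ENNReal.ofReal ((φ (x + z) - φ x) ^ 2) ∂(volume.withDensity f)
      = ∫⁻ z in S, f z * translationDefect φ z ^ 2 := by
  simp_rw [restrict_withDensity hS]
  rw [lintegral_congr fun x => lintegral_withDensity_eq_lintegral_mul _ hf (by fun_prop)]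
  simp only [Pi.mul_apply]
  rw [lintegral_lintegral_swap (by fun_prop)]
  refine lintegral_congr fun z => ?_
  rw [translationDefect, sq_eLpNorm_two_eq_lintegral, ← lintegral_const_mul _ (by fun_prop)]

lemma volume_ball_mul_sq_translationDefect_le {φ : E → ℝ} (hφ : Measurable φ) (y : E) (r : ℝ) :
    volume (ball ((2 : ℝ)⁻¹ • y) r) * translationDefect φ y ^ 2
      ≤ 4 * ∫⁻ z in ball ((2 : ℝ)⁻¹ • y) r, translationDefect φ z ^ 2 := by
  set A := ball ((2 : ℝ)⁻¹ • y) r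
  have hA : (y - ·) ⁻¹' A = A := by
    ext z
    simp only [A, Set.mem_preimage, mem_ball, dist_eq_norm]
    rw [← norm_neg]
    congr! 2
    module
  have hreflect : ∫⁻ z in A, translationDefect φ (y - z) ^ 2
      = ∫⁻ z in A, translationDefect φ z ^ 2 := by
    conv_lhs => rw [← hA]
    exact (Measure.measurePreserving_sub_left volume y).setLIntegral_comp_preimage
      measurableSet_ball (measurable_sq_translationDefect hφ)
  calc volume A * translationDefect φ y ^ 2 = ∫⁻ _ in A, translationDefect φ y ^ 2 := by
        rw [setLIntegral_const, mul_comm]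
    _ ≤ ∫⁻ z in A, 2 * (translationDefect φ z ^ 2 + translationDefect φ (y - z) ^ 2) :=
        lintegral_mono fun z => sq_translationDefect_le hφ y z
    _ = 4 * ∫⁻ z in A, translationDefect φ z ^ 2 := by
        rw [lintegral_const_mul' _ _ (by norm_num),
          lintegral_add_left (measurable_sq_translationDefect hφ), hreflect]
        ring

lemma setLIntegral_ball_sq_translationDefect_le {f : E → ℝ≥0∞} (hf : Measurable f)
    {ν : ℝ → ℝ} (hν0 : ∀ r, 0 ≤ ν r) (hνmono : MonotoneOn ν (Set.Ici 0))
    (hlow : ∀ z : E, z ≠ 0 → 1 ≤ f z * ENNReal.ofReal (‖z‖ ^ finrank ℝ E * ν ‖z‖))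
    {φ : E → ℝ} (hφ : Measurable φ) {B : ℝ≥0∞} {c : ℝ}
    (hB : ∫⁻ z in {z : E | c < ‖z‖}, f z * translationDefect φ z ^ 2 ≤ B)
    {y : E} (hy : c ≤ ‖y‖ / 4) :
    ∫⁻ z in ball ((2 : ℝ)⁻¹ • y) (‖y‖ / 4), translationDefect φ z ^ 2
      ≤ ENNReal.ofReal ((3 * ‖y‖ / 4) ^ finrank ℝ E * ν (3 * ‖y‖ / 4)) * B := by
  set κ := ENNReal.ofReal ((3 * ‖y‖ / 4) ^ finrank ℝ E * ν (3 * ‖y‖ / 4)) with hκ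
  have hdensity : ∀ z ∈ ball ((2 : ℝ)⁻¹ • y) (‖y‖ / 4), 1 ≤ κ * f z := by
    intro z hz
    obtain ⟨hz₁, hz₂⟩ := norm_mem_Ioo_of_mem_ball_half_smul hz
    refine (hlow z (norm_pos_iff.1 (by linarith [norm_nonneg y]))).trans ?_
    rw [mul_comm κ, hκ]
    gcongr f z * ENNReal.ofReal ?_
    exact mul_le_mul (pow_le_pow_left₀ (norm_nonneg z) hz₂.le _)
      (hνmono (norm_nonneg z) (Set.mem_Ici.2 (by positivity)) hz₂.le) (hν0 _) (by positivity)
  have hmeas : Measurable fun z => f z * translationDefect φ z ^ 2 :=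
    hf.mul (measurable_sq_translationDefect hφ)
  calc ∫⁻ z in ball ((2 : ℝ)⁻¹ • y) (‖y‖ / 4), translationDefect φ z ^ 2
      ≤ ∫⁻ z in ball ((2 : ℝ)⁻¹ • y) (‖y‖ / 4), κ * (f z * translationDefect φ z ^ 2) :=
        setLIntegral_mono (measurable_const.mul hmeas) fun z hz => by
          rw [← mul_assoc]; exact le_mul_of_one_le_left' (hdensity z hz)
    _ = κ * ∫⁻ z in ball ((2 : ℝ)⁻¹ • y) (‖y‖ / 4), f z * translationDefect φ z ^ 2 :=
        lintegral_const_mul _ hmeas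
    _ ≤ κ * B := by
        gcongr
        refine (lintegral_mono_set fun z hz => ?_).trans hB
        exact hy.trans_lt (norm_mem_Ioo_of_mem_ball_half_smul hz).1

lemma sq_translationDefect_le_of_setLIntegral_le {f : E → ℝ≥0∞} (hf : Measurable f)
    {ν : ℝ → ℝ} (hν0 : ∀ r, 0 ≤ ν r) (hνmono : MonotoneOn ν (Set.Ici 0))
    (hlow : ∀ z : E, z ≠ 0 → 1 ≤ f z * ENNReal.ofReal (‖z‖ ^ finrank ℝ E * ν ‖z‖))
    {φ : E → ℝ} (hφ : Measurable φ) {B : ℝ≥0∞} {c : ℝ} (hc : 0 < c)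
    (hB : ∫⁻ z in {z : E | c < ‖z‖}, f z * translationDefect φ z ^ 2 ≤ B)
    {y : E} (hy : c ≤ ‖y‖ / 4) :
    translationDefect φ y ^ 2 ≤ 4 * 3 ^ finrank ℝ E * B / volume (ball (0 : E) 1)
      * ENNReal.ofReal (ν (3 * ‖y‖ / 4)) := by
  set n := finrank ℝ E
  have hr : 0 < ‖y‖ / 4 := hc.trans_le hy
  have : Nontrivial E := nontrivial_of_ne y 0 (norm_pos_iff.1 (by linarith))
  have hvol : volume (ball ((2 : ℝ)⁻¹ • y) (‖y‖ / 4))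
      = ENNReal.ofReal (‖y‖ / 4) ^ n * volume (ball (0 : E) 1) := by
    rw [Measure.addHaar_ball _ _ hr.le, ENNReal.ofReal_pow hr.le]
  have hrn : ENNReal.ofReal (‖y‖ / 4) ^ n ≠ 0 := pow_ne_zero _ (ENNReal.ofReal_pos.2 hr).ne'
  have hrn' : ENNReal.ofReal (‖y‖ / 4) ^ n ≠ ∞ := ENNReal.pow_ne_top ENNReal.ofReal_ne_top
  have hball : volume (ball (0 : E) 1) * translationDefect φ y ^ 2
      ≤ 4 * 3 ^ n * B * ENNReal.ofReal (ν (3 * ‖y‖ / 4)) := by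
    rw [← ENNReal.mul_le_mul_iff_right hrn hrn', ← mul_assoc, ← hvol]
    refine (volume_ball_mul_sq_translationDefect_le hφ y _).trans ?_
    refine (mul_le_mul_right
      (setLIntegral_ball_sq_translationDefect_le hf hν0 hνmono hlow hφ hB hy) 4).trans_eq ?_
    rw [ENNReal.ofReal_mul (by positivity), ENNReal.ofReal_pow (by positivity),
      show 3 * ‖y‖ / 4 = 3 * (‖y‖ / 4) by ring, ENNReal.ofReal_mul (by norm_num),
      ENNReal.ofReal_ofNat]
    ring
  rwa [← ENNReal.mul_div_right_comm, ENNReal.le_div_iff_mul_le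
    (Or.inl (measure_ball_pos volume (0 : E) one_pos).ne') (Or.inl measure_ball_lt_top.ne),
    mul_comm]

end FiniteDimensional

theorem stmt13_general (d : ℕ) (μ : Measure (EuclideanSpace ℝ (Fin d)))
    (f : EuclideanSpace ℝ (Fin d) → ℝ≥0∞) (hf : Measurable f)
    (hdens : μ = volume.withDensity f)
    (ν : ℝ → ℝ) (hν0 : ∀ r, 0 ≤ ν r) (hνmono : MonotoneOn ν (Set.Ici 0))
    (hνlim : Tendsto ν (nhdsWithin 0 (Set.Ioi 0)) (𝓝 0))
    (hlow : ∀ z : EuclideanSpace ℝ (Fin d), z ≠ 0 →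
        1 ≤ f z * ENNReal.ofReal (‖z‖ ^ d * ν ‖z‖))
    (φ : ℕ → EuclideanSpace ℝ (Fin d) → ℝ)
    (hmeas : ∀ n, Measurable (φ n)) (hL2 : ∀ n, MemLp (φ n) 2 volume)
    (C : ℝ≥0∞) (hC : C ≠ ⊤)
    (hbdd : ∀ n : ℕ,
      ENNReal.ofReal (1 / 2)
          * ∫⁻ x, (∫⁻ z in {z | ((n : ℝ) + 1)⁻¹ < ‖z‖},
              ENNReal.ofReal ((φ n (x + z) - φ n x) ^ 2) ∂μ) ∂volume ≤ C) :
    Tendsto (fun y : EuclideanSpace ℝ (Fin d) =>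
        ⨆ n, eLpNorm (fun x => φ n (x + y) - φ n x) 2 volume) (𝓝 0) (𝓝 0) := by
  subst hdens
  set K : ℝ≥0∞ := 4 * 3 ^ finrank ℝ (EuclideanSpace ℝ (Fin d)) * (2 * C)
    / volume (ball (0 : EuclideanSpace ℝ (Fin d)) 1)
  have hK : K ≠ ∞ := ENNReal.div_ne_top (by finiteness) (measure_ball_pos _ _ one_pos).ne'
  have henergy (k : ℕ) : ∫⁻ z in {z | ((k : ℝ) + 1)⁻¹ < ‖z‖},
      f z * translationDefect (φ k) z ^ 2 ≤ 2 * C := by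
    have h := hbdd k
    rwa [lintegral_setLIntegral_withDensity_eq hf (hmeas k)
        (measurableSet_lt measurable_const measurable_norm), one_div,
      ENNReal.ofReal_inv_of_pos two_pos, ENNReal.ofReal_ofNat,
      ENNReal.inv_mul_le_iff two_ne_zero ENNReal.ofNat_ne_top] at h
  have hbound (k : ℕ) (y : EuclideanSpace ℝ (Fin d)) : translationDefect (φ k) y ^ 2
      ≤ 4 * K * ENNReal.ofReal (ν (max (9 * ((k : ℝ) + 1)⁻¹) (3 * ‖y‖ / 4))) :=
    sq_translationDefect_le_of_forall_le (hmeas k) hνmono (by positivity) (fun y hy =>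
      sq_translationDefect_le_of_setLIntegral_le hf hν0 hνmono
        (by rwa [finrank_euclideanSpace_fin]) (hmeas k) (by positivity) (henergy k) hy) y
  refine tendsto_iSup_of_tendsto_prod_atTop (g := fun k => translationDefect (φ k))
    (fun k => tendsto_translationDefect (hL2 k)) (ENNReal.tendsto_nhds_zero_of_tendsto_sq ?_)
  have hlim := ENNReal.Tendsto.const_mul (ENNReal.tendsto_ofReal
    (hνlim.comp (tendsto_max_inv_succ_norm_nhdsGT (E := EuclideanSpace ℝ (Fin d)))))
    (Or.inr (by finiteness : 4 * K ≠ ∞))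
  rw [ENNReal.ofReal_zero, mul_zero] at hlim
  exact tendsto_of_tendsto_of_tendsto_of_le_of_le tendsto_const_nhds hlim
    (fun _ => zero_le) fun p => hbound p.1 p.2

/-- Equicontinuity of `L²`-translations from uniformly bounded truncated energies:
if `μ` has a density bounded below by `1/(|z|^d ν(|z|))` with `ν ≥ 0` non-decreasing
and `ν(0⁺) = 0`, and the truncated energies (over `|z| > 1/n`) of `(φ_n)` are
uniformly bounded, then `sup_n ‖φ_n(·+y) - φ_n‖_{L²} → 0` as `|y| → 0`. -/
theorem stmt13 (d : ℕ) (μ : Measure (EuclideanSpace ℝ (Fin d)))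
    (hsym : μ.map (fun z => -z) = μ)
    (hμ : ∫⁻ z, ENNReal.ofReal (min (‖z‖ ^ 2) 1) ∂μ ≠ ⊤)
    (f : EuclideanSpace ℝ (Fin d) → ℝ≥0∞) (hf : Measurable f)
    (hdens : μ = volume.withDensity f)
    (ν : ℝ → ℝ) (hν0 : ∀ r, 0 ≤ ν r) (hνmono : MonotoneOn ν (Set.Ici 0))
    (hνlim : Tendsto ν (nhdsWithin 0 (Set.Ioi 0)) (𝓝 0))
    (hlow : ∀ z : EuclideanSpace ℝ (Fin d), z ≠ 0 →
        1 ≤ f z * ENNReal.ofReal (‖z‖ ^ d * ν ‖z‖))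
    (φ : ℕ → EuclideanSpace ℝ (Fin d) → ℝ)
    (hmeas : ∀ n, Measurable (φ n)) (hL2 : ∀ n, MemLp (φ n) 2 volume)
    (C : ℝ≥0∞) (hC : C ≠ ⊤)
    (hbdd : ∀ n : ℕ,
      ENNReal.ofReal (1 / 2)
          * ∫⁻ x, (∫⁻ z in {z | ((n : ℝ) + 1)⁻¹ < ‖z‖},
              ENNReal.ofReal ((φ n (x + z) - φ n x) ^ 2) ∂μ) ∂volume ≤ C) :
    Tendsto (fun y : EuclideanSpace ℝ (Fin d) =>
        ⨆ n, eLpNorm (fun x => φ n (x + y) - φ n x) 2 volume) (𝓝 0) (𝓝 0) :=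
  stmt13_general d μ f hf hdens ν hν0 hνmono hνlim hlow φ hmeas hL2 C hC hbdd
end

section
/- Let $\mu$ be a finite symmetric nonnegative Borel measure on $\mathbb{R}$ given by $\mu=\sum_{k=0}^{\infty}2^{k-1}\big(\delta_{-2^{-k}}+\delta_{2^{-k}}\big)$. Then (i) $\int_{\mathbb{R}}|z|^2\,d\mu(z)=2$; (ii) the symbol $m(\xi)=\sum_{k=0}^{\infty}2^{k}\big[1-\cos(\xi/2^{k})\big]$ satisfies $m(\xi)\ge 2^{n}(1-\cos 1)$ for all $\xi$ with $|\xi|\in[2^{n},2^{n+1}]$, hence $\liminf_{|\xi|\to\infty}m(\xi)=\infty$; (iii) for each $j\in\mathbb{N}$, the truncated symbol $m_j(\xi)=\sum_{k=0}^{j-1}2^{k}[1-\cos(\xi/2^{k})]$ vanishes at $\xi_j=\pi 2^{j}$. -/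
open MeasureTheory Filter Topology Real
open scoped ENNReal NNReal

lemma summable_aux (ξ : ℝ) :
    Summable (fun k : ℕ => (2 : ℝ) ^ k * (1 - Real.cos (ξ / 2 ^ k))) := by
  apply Summable.of_nonneg_of_le (fun k => ?_) (fun k => ?_)
    (((summable_geometric_of_lt_one (by norm_num) (by norm_num : (2:ℝ)⁻¹ < 1))).mul_left (ξ^2/2))
  · exact mul_nonneg (by positivity) (by linarith [Real.cos_le_one (ξ / 2 ^ k)])
  · have h2 : (0:ℝ) < 2 ^ k := by positivity
    have hb : 1 - Real.cos (ξ / 2 ^ k) ≤ (ξ / 2 ^ k) ^ 2 / 2 := by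
      have := Real.one_sub_sq_div_two_le_cos (x := ξ / 2 ^ k)
      linarith
    calc (2:ℝ) ^ k * (1 - Real.cos (ξ / 2 ^ k)) ≤ 2 ^ k * ((ξ / 2 ^ k) ^ 2 / 2) := by
          exact mul_le_mul_of_nonneg_left hb h2.le
      _ = ξ ^ 2 / 2 * (2:ℝ)⁻¹ ^ k := by
          rw [inv_pow]; field_simp

lemma lower_aux (n : ℕ) (ξ : ℝ) (h1 : (2:ℝ) ^ n ≤ |ξ|) (h2 : |ξ| ≤ 2 ^ (n+1)) :
    (2 : ℝ) ^ n * (1 - Real.cos 1) ≤ ∑' k : ℕ, (2 : ℝ) ^ k * (1 - Real.cos (ξ / 2 ^ k)) := by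
  have h2p : (0:ℝ) < 2 ^ n := by positivity
  have hcos : Real.cos (ξ / 2 ^ n) ≤ Real.cos 1 := by
    rw [← Real.cos_abs, abs_div, abs_of_pos h2p]
    apply Real.cos_le_cos_of_nonneg_of_le_pi zero_le_one
    · rw [div_le_iff₀ h2p]
      calc |ξ| ≤ 2 ^ (n+1) := h2
        _ = 2 * 2 ^ n := by ring
        _ ≤ π * 2 ^ n := by nlinarith [Real.pi_gt_three]
    · rw [le_div_iff₀ h2p]; simpa using h1
  calc (2:ℝ) ^ n * (1 - Real.cos 1) ≤ 2 ^ n * (1 - Real.cos (ξ / 2 ^ n)) := by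
        apply mul_le_mul_of_nonneg_left (by linarith) h2p.le
    _ ≤ _ := by
        apply Summable.le_tsum (summable_aux ξ)
        intro k _
        exact mul_nonneg (by positivity) (by linarith [Real.cos_le_one (ξ / 2 ^ k)])

/-- The 1-d Lévy measure `μ = ∑_k 2^{k-1}(δ_{-2^{-k}} + δ_{2^{-k}})`:
(i) `∫ z² dμ = 2`; (ii) its symbol `m(ξ) = ∑_k 2^k (1 - cos(ξ/2^k))` satisfies
`m(ξ) ≥ 2^n (1 - cos 1)` for `|ξ| ∈ [2^n, 2^{n+1}]`, hence `m(ξ) → ∞` as `|ξ| → ∞`;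
(iii) each truncated symbol `m_j(ξ) = ∑_{k<j} 2^k (1 - cos(ξ/2^k))` vanishes at
`ξ_j = π 2^j`. -/
theorem stmt17 :
    let μ : Measure ℝ := Measure.sum (fun k : ℕ =>
      ((2 : ℝ≥0∞) ^ k / 2) •
        (Measure.dirac (-(((2 : ℝ) ^ k)⁻¹)) + Measure.dirac (((2 : ℝ) ^ k)⁻¹)))
    let m : ℝ → ℝ := fun ξ => ∑' k : ℕ, (2 : ℝ) ^ k * (1 - Real.cos (ξ / 2 ^ k))
    (∫⁻ z, ENNReal.ofReal (z ^ 2) ∂μ = 2) ∧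
    (∀ n : ℕ, ∀ ξ : ℝ, (2 : ℝ) ^ n ≤ |ξ| → |ξ| ≤ 2 ^ (n + 1) →
        (2 : ℝ) ^ n * (1 - Real.cos 1) ≤ m ξ) ∧
    Tendsto m (cocompact ℝ) atTop ∧
    (∀ j : ℕ, ∑ k ∈ Finset.range j,
        (2 : ℝ) ^ k * (1 - Real.cos (Real.pi * 2 ^ j / 2 ^ k)) = 0) := by
  intro μ m
  refine ⟨?_, lower_aux, ?_, ?_⟩
  · rw [lintegral_sum_measure]
    have hterm : ∀ k : ℕ, (∫⁻ z, ENNReal.ofReal (z ^ 2)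
        ∂(((2 : ℝ≥0∞) ^ k / 2) •
          (Measure.dirac (-(((2 : ℝ) ^ k)⁻¹)) + Measure.dirac (((2 : ℝ) ^ k)⁻¹))))
        = (2 : ℝ≥0∞)⁻¹ ^ k := by
      intro k
      rw [lintegral_smul_measure, lintegral_add_measure, lintegral_dirac, lintegral_dirac,
        neg_sq]
      have hx : ENNReal.ofReal (((2:ℝ) ^ k)⁻¹ ^ 2) = (((2:ℝ≥0∞) ^ k)⁻¹) ^ 2 := by
        rw [ENNReal.ofReal_pow (by positivity), ENNReal.ofReal_inv_of_pos (by positivity),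
          ENNReal.ofReal_pow (by norm_num)]
        norm_num
      have hne : ((2:ℝ≥0∞) ^ k) ≠ 0 := pow_ne_zero k two_ne_zero
      have hnt : ((2:ℝ≥0∞) ^ k) ≠ ∞ := ENNReal.pow_ne_top ENNReal.ofNat_ne_top
      rw [hx]
      calc (2:ℝ≥0∞) ^ k / 2 * ((((2:ℝ≥0∞) ^ k)⁻¹) ^ 2 + (((2:ℝ≥0∞) ^ k)⁻¹) ^ 2)
          = (2⁻¹ * 2) * ((2:ℝ≥0∞) ^ k * ((2:ℝ≥0∞) ^ k)⁻¹ * ((2:ℝ≥0∞) ^ k)⁻¹) := by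
            rw [← two_mul, div_eq_mul_inv, sq]; ring
        _ = ((2:ℝ≥0∞) ^ k)⁻¹ := by
            rw [ENNReal.inv_mul_cancel two_ne_zero ENNReal.ofNat_ne_top,
              ENNReal.mul_inv_cancel hne hnt, one_mul, one_mul]
        _ = (2:ℝ≥0∞)⁻¹ ^ k := ENNReal.inv_pow
    rw [tsum_congr hterm, ENNReal.tsum_geometric, ENNReal.one_sub_inv_two, inv_inv]
  · have hc1 : Real.cos 1 < 1 := by
      have := Real.cos_lt_cos_of_nonneg_of_le_pi le_rfl
        (by linarith [Real.pi_gt_three]) zero_lt_one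
      simpa using this
    have key : ∀ ξ : ℝ, 1 ≤ |ξ| → (1 - Real.cos 1) / 2 * |ξ| ≤ m ξ := by
      intro ξ hξ
      set N := ⌊|ξ|⌋₊ with hN
      have hN1 : 1 ≤ N := Nat.le_floor (by exact_mod_cast hξ)
      set n := Nat.log 2 N with hn
      have hl : (2:ℝ) ^ n ≤ |ξ| := by
        calc (2:ℝ) ^ n ≤ (N : ℝ) := by exact_mod_cast Nat.pow_log_le_self 2 (by omega)
          _ ≤ |ξ| := Nat.floor_le (abs_nonneg ξ)
      have hu : |ξ| ≤ 2 ^ (n + 1) := by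
        have h1 : N + 1 ≤ 2 ^ (n + 1) := Nat.lt_pow_succ_log_self (by norm_num) N
        calc |ξ| ≤ (N : ℝ) + 1 := (Nat.lt_floor_add_one _).le
          _ ≤ 2 ^ (n + 1) := by exact_mod_cast h1
      have hlow := lower_aux n ξ hl hu
      have h2n : (2:ℝ) ^ (n+1) = 2 * 2 ^ n := by ring
      nlinarith [hlow, hu, h2n]
    have hbase : Tendsto (fun ξ : ℝ => (1 - Real.cos 1) / 2 * |ξ|) (cocompact ℝ) atTop := by
      have := tendsto_norm_cocompact_atTop (E := ℝ)
      exact this.const_mul_atTop (by linarith)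
    apply tendsto_atTop_mono' _ _ hbase
    filter_upwards [(tendsto_norm_cocompact_atTop (E := ℝ)).eventually_ge_atTop 1] with ξ hξ
    exact key ξ (by simpa [Real.norm_eq_abs] using hξ)
  · intro j
    apply Finset.sum_eq_zero
    intro k hk
    rw [Finset.mem_range] at hk
    obtain ⟨t, ht⟩ := Nat.exists_eq_add_of_lt hk
    have : Real.pi * 2 ^ j / 2 ^ k = (2 ^ t : ℕ) * (2 * Real.pi) := by
      subst ht
      have h2 : (0:ℝ) < 2 ^ k := by positivity
      push_cast
      rw [pow_add, pow_add]
      field_simp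
    rw [this, Real.cos_nat_mul_two_pi]
    ring
end
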